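/- Let h: ℝ^d → ℝ^m be Lipschitz. Let (ξ^n) be a sequence in C_d converging uniformly to ξ₀ ∈ C_d, and let (v^n) be a sequence in L²_m with sup_n ∫₀ᵀ‖v^n(s)‖² ds < ∞ converging weakly in L²_m to v. For η ∈ C_d define Δ^n(η) = H(η, ξ₀, v) − H(η, ξ^n, v) + ∫₀ᵀ ⟨h(η(s)), v^n(s) − v(s)⟩ ds. Then for every δ > 0 and every η ∈ C_d there exist n₀ ∈ ℕ and δ₁ > 0 such that |Δ^n(η̃)| < δ whenever η̃ ∈ C_d, ‖η − η̃‖_* ≤ δ₁ and n ≥ n₀. -/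

import Mathlib

open MeasureTheory Set Filter Topology
open scoped RealInnerProductSpace ENNReal NNReal

noncomputable section

/-- `C([0,T]; ℝ^p)` with the supremum norm. -/
abbrev Pth (T : ℝ) (p : ℕ) := C(Set.Icc (0:ℝ) T, EuclideanSpace ℝ (Fin p))

/-- Extension of a path on `[0,T]` to all of `ℝ` by projection onto `[0,T]`. -/
def pext {T : ℝ} (hT : (0:ℝ) ≤ T) {p : ℕ} (η : Pth T p) : ℝ → EuclideanSpace ℝ (Fin p) :=
  fun s => η (Set.projIcc (0:ℝ) T hT s)

/-- Square integrability on `[0,T]`. -/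
def L2on (T : ℝ) {p : ℕ} (f : ℝ → EuclideanSpace ℝ (Fin p)) : Prop :=
  MeasureTheory.MemLp f 2 (MeasureTheory.volume.restrict (Set.Icc (0:ℝ) T))

/-- `H(η, η̃, ψ) = ½∫₀ᵀ ‖h(η(s)) − h(η̃(s)) − ψ(s)‖² ds`. -/
def Hfun {T : ℝ} (hT : 0 < T) {d m : ℕ}
    (h : EuclideanSpace ℝ (Fin d) → EuclideanSpace ℝ (Fin m))
    (η ηt : Pth T d) (ψ : ℝ → EuclideanSpace ℝ (Fin m)) : ℝ :=
  2⁻¹ * ∫ s in Set.Icc (0:ℝ) T, ‖h (pext hT.le η s) - h (pext hT.le ηt s) - ψ s‖ ^ 2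

/-!
Write `Δ^n(η̃)` as the sum of three terms. The `H`-difference is at most
`C(η̃, ξ^n) ‖ξ^n − ξ₀‖`, with `C` continuous, because `|‖x‖² − ‖y‖²| ≤ ‖x − y‖ (‖x‖ + ‖y‖)`
and `h` is Lipschitz. The pairing `∫⟨h(η), v^n − v⟩` with the fixed path `η` tends to `0` by weak
convergence. The remainder `∫⟨h(η̃) − h(η), v^n − v⟩` is at most
`L ‖η̃ − η‖_* sup_n ‖v^n − v‖_{L¹}`, finite since the `L²` norms are bounded. Hence `Δ^n(η̃) → 0`
jointly as `n → ∞` and `η̃ → η`, which is the claim.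
-/

theorem abs_sq_norm_sub_sq_norm_le {E : Type*} [SeminormedAddCommGroup E] (x y : E) :
    |‖x‖ ^ 2 - ‖y‖ ^ 2| ≤ ‖x - y‖ * (‖x‖ + ‖y‖) := by
  rw [sq_sub_sq, abs_mul, abs_of_nonneg (by positivity : 0 ≤ ‖x‖ + ‖y‖), mul_comm]
  exact mul_le_mul_of_nonneg_right (abs_norm_sub_norm_le x y) (by positivity)

section Integrals

variable {α : Type*} [MeasurableSpace α] {μ : Measure α}

section Norm

variable {E : Type*} [NormedAddCommGroup E]

theorem abs_integral_sq_norm_sub_le {f g : α → E} {b : α → ℝ} {c : ℝ}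
    (hf : MemLp f 2 μ) (hg : MemLp g 2 μ) (hb : Integrable b μ)
    (hfg : ∀ x, ‖f x - g x‖ ≤ c) (hfgb : ∀ x, ‖f x‖ + ‖g x‖ ≤ b x) :
    |∫ x, ‖f x‖ ^ 2 ∂μ - ∫ x, ‖g x‖ ^ 2 ∂μ| ≤ c * ∫ x, b x ∂μ := by
  rw [← integral_sub (hf.integrable_norm_pow two_ne_zero) (hg.integrable_norm_pow two_ne_zero),
    ← integral_const_mul, ← Real.norm_eq_abs]
  refine norm_integral_le_of_norm_le (hb.const_mul c) (ae_of_all _ fun x => ?_)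
  have hc : 0 ≤ c := (norm_nonneg _).trans (hfg x)
  calc ‖‖f x‖ ^ 2 - ‖g x‖ ^ 2‖ ≤ ‖f x - g x‖ * (‖f x‖ + ‖g x‖) := abs_sq_norm_sub_sq_norm_le _ _
    _ ≤ c * b x := mul_le_mul (hfg x) (hfgb x) (by positivity) hc

-- `‖y‖ ≤ (1 + ‖y‖²) / 2`, integrated.
theorem integral_norm_le_of_integral_sq_norm_le [IsFiniteMeasure μ] {f : α → E} {M : ℝ}
    (hf : MemLp f 2 μ) (hM : ∫ x, ‖f x‖ ^ 2 ∂μ ≤ M) :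
    ∫ x, ‖f x‖ ∂μ ≤ (μ.real Set.univ + M) / 2 := by
  have hsq := hf.integrable_norm_pow two_ne_zero
  calc ∫ x, ‖f x‖ ∂μ ≤ ∫ x, (1 + ‖f x‖ ^ 2) / 2 ∂μ :=
        integral_mono (hf.integrable one_le_two).norm
          (((integrable_const 1).add hsq).div_const 2) fun x => by
          nlinarith [sq_nonneg (‖f x‖ - 1)]
    _ = (μ.real Set.univ + ∫ x, ‖f x‖ ^ 2 ∂μ) / 2 := by
        rw [integral_div, integral_add (integrable_const 1) hsq, integral_const, smul_eq_mul,
          mul_one]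
    _ ≤ (μ.real Set.univ + M) / 2 := by gcongr

theorem exists_forall_integral_norm_sub_le [IsFiniteMeasure μ] {ι : Type*} {u : ι → α → E}
    {u₀ : α → E} {M : ℝ} (hu : ∀ i, MemLp (u i) 2 μ) (hu₀ : Integrable u₀ μ)
    (hM : ∀ i, ∫ x, ‖u i x‖ ^ 2 ∂μ ≤ M) :
    ∃ K, ∀ i, ∫ x, ‖u i x - u₀ x‖ ∂μ ≤ K := by
  refine ⟨(μ.real Set.univ + M) / 2 + ∫ x, ‖u₀ x‖ ∂μ, fun i => ?_⟩
  have hui := (hu i).integrable one_le_two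
  calc ∫ x, ‖u i x - u₀ x‖ ∂μ ≤ ∫ x, ‖u i x‖ + ‖u₀ x‖ ∂μ :=
        integral_mono (hui.sub hu₀).norm (hui.norm.add hu₀.norm) fun x => norm_sub_le _ _
    _ = ∫ x, ‖u i x‖ ∂μ + ∫ x, ‖u₀ x‖ ∂μ := integral_add hui.norm hu₀.norm
    _ ≤ _ := by grw [integral_norm_le_of_integral_sq_norm_le (hu i) (hM i)]

end Norm

section InnerProduct

variable {E : Type*} [NormedAddCommGroup E] [InnerProductSpace ℝ E]

theorem integrable_inner_of_norm_le {f g : α → E} {c : ℝ} (hf : AEStronglyMeasurable f μ)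
    (hfc : ∀ x, ‖f x‖ ≤ c) (hg : Integrable g μ) : Integrable (fun x => ⟪f x, g x⟫) μ :=
  (hg.norm.const_mul c).mono' (hf.inner hg.1) (ae_of_all _ fun x =>
    (norm_inner_le_norm _ _).trans (mul_le_mul_of_nonneg_right (hfc x) (norm_nonneg _)))

theorem abs_integral_inner_le_of_norm_le {f g : α → E} {c : ℝ} (hfc : ∀ x, ‖f x‖ ≤ c)
    (hg : Integrable g μ) : |∫ x, ⟪f x, g x⟫ ∂μ| ≤ c * ∫ x, ‖g x‖ ∂μ := by
  rw [← integral_const_mul, ← Real.norm_eq_abs]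
  exact norm_integral_le_of_norm_le (hg.norm.const_mul c) (ae_of_all _ fun x =>
    (norm_inner_le_norm _ _).trans (mul_le_mul_of_nonneg_right (hfc x) (norm_nonneg _)))

theorem integral_inner_sub_eq_sub_add {a f u u₀ : α → E} {c c' : ℝ}
    (ha : AEStronglyMeasurable a μ) (hac : ∀ x, ‖a x‖ ≤ c)
    (hf : AEStronglyMeasurable f μ) (hfc : ∀ x, ‖f x‖ ≤ c')
    (hu : Integrable u μ) (hu₀ : Integrable u₀ μ) :
    ∫ x, ⟪a x, u x - u₀ x⟫ ∂μ
      = (∫ x, ⟪u x, f x⟫ ∂μ - ∫ x, ⟪u₀ x, f x⟫ ∂μ) + ∫ x, ⟪a x - f x, u x - u₀ x⟫ ∂μ := by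
  have hinner {w : α → E} (hw : Integrable w μ) : Integrable (fun x => ⟪w x, f x⟫) μ :=
    (integrable_inner_of_norm_le hf hfc hw).congr (ae_of_all _ fun x => real_inner_comm _ _)
  have hdiff : Integrable (fun x => ⟪a x - f x, u x - u₀ x⟫) μ :=
    integrable_inner_of_norm_le (ha.sub hf) (fun x => (norm_sub_le _ _).trans
      (add_le_add (hac x) (hfc x))) (hu.sub hu₀)
  rw [← integral_sub (hinner hu) (hinner hu₀),
    ← integral_add (f := fun x => ⟪u x, f x⟫ - ⟪u₀ x, f x⟫) ((hinner hu).sub (hinner hu₀)) hdiff]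
  refine integral_congr_ae (ae_of_all _ fun x => ?_)
  simp only [inner_sub_left, inner_sub_right, real_inner_comm (f x)]
  ring

end InnerProduct

end Integrals

theorem exists_forall_abs_lt_of_tendsto_atTop_prod_nhds {X : Type*} [PseudoMetricSpace X]
    {F : ℕ × X → ℝ} {x : X} (hF : Tendsto F (atTop ×ˢ 𝓝 x) (𝓝 0)) {δ : ℝ} (hδ : 0 < δ) :
    ∃ n₀ : ℕ, ∃ δ₁ > (0:ℝ), ∀ y, dist x y ≤ δ₁ → ∀ n ≥ n₀, |F (n, y)| < δ := by
  obtain ⟨⟨n₀, δ₁⟩, ⟨-, hδ₁⟩, hsub⟩ :=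
    (atTop_basis.prod Metric.nhds_basis_closedBall).mem_iff.1 (hF (Metric.ball_mem_nhds 0 hδ))
  refine ⟨n₀, δ₁, hδ₁, fun y hy n hn => ?_⟩
  have := hsub (Set.mk_mem_prod (Set.mem_Ici.2 hn) (Metric.mem_closedBall.2 (dist_comm x y ▸ hy)))
  simpa [Real.norm_eq_abs] using this

section Paths

variable {T : ℝ} {p : ℕ}

theorem continuous_pext (hT : 0 ≤ T) (η : Pth T p) : Continuous (pext hT η) :=
  η.continuous.comp continuous_projIcc

theorem norm_pext_le (hT : 0 ≤ T) (η : Pth T p) (s : ℝ) : ‖pext hT η s‖ ≤ ‖η‖ :=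
  η.norm_coe_le_norm _

theorem norm_pext_sub_pext_le (hT : 0 ≤ T) (η η' : Pth T p) (s : ℝ) :
    ‖pext hT η s - pext hT η' s‖ ≤ ‖η - η'‖ :=
  (η - η').norm_coe_le_norm _

namespace LipschitzWith

variable {F : Type*} [SeminormedAddCommGroup F] {h : EuclideanSpace ℝ (Fin p) → F} {L : ℝ≥0}

theorem norm_comp_pext_le (hh : LipschitzWith L h) (hT : 0 ≤ T) (η : Pth T p) (s : ℝ) :
    ‖h (pext hT η s)‖ ≤ ‖h 0‖ + L * ‖η‖ :=
  calc ‖h (pext hT η s)‖ ≤ ‖h 0‖ + ‖h (pext hT η s) - h 0‖ := norm_le_insert' _ _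
    _ ≤ ‖h 0‖ + L * ‖pext hT η s - 0‖ := by grw [hh.norm_sub_le]
    _ ≤ ‖h 0‖ + L * ‖η‖ := by grw [sub_zero, norm_pext_le]

theorem norm_comp_pext_sub_le (hh : LipschitzWith L h) (hT : 0 ≤ T) (η η' : Pth T p) (s : ℝ) :
    ‖h (pext hT η s) - h (pext hT η' s)‖ ≤ L * ‖η - η'‖ :=
  (hh.norm_sub_le _ _).trans (by grw [norm_pext_sub_pext_le])

end LipschitzWith

theorem LipschitzWith.memLp_comp_pext {F : Type*} [NormedAddCommGroup F]
    {h : EuclideanSpace ℝ (Fin p) → F} {L : ℝ≥0} (hh : LipschitzWith L h) (hT : 0 ≤ T)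
    (η : Pth T p) (q : ℝ≥0∞) :
    MemLp (fun s => h (pext hT η s)) q (volume.restrict (Icc 0 T)) :=
  .of_bound (hh.continuous.comp (continuous_pext hT η)).aestronglyMeasurable _
    (ae_of_all _ (hh.norm_comp_pext_le hT η))

theorem LipschitzWith.tendsto_integral_inner_comp_pext_sub (hT : 0 ≤ T)
    {F : Type*} [NormedAddCommGroup F] [InnerProductSpace ℝ F]
    {h : EuclideanSpace ℝ (Fin p) → F} {L : ℝ≥0} (hh : LipschitzWith L h)
    {ι : Type*} {l : Filter ι} {w : ι → ℝ → F}
    (hw : ∀ i, Integrable (w i) (volume.restrict (Icc 0 T)))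
    {K : ℝ} (hK : ∀ i, ∫ s in Icc 0 T, ‖w i s‖ ≤ K) (η : Pth T p) :
    Tendsto (fun q : ι × Pth T p =>
        ∫ s in Icc 0 T, ⟪h (pext hT q.2 s) - h (pext hT η s), w q.1 s⟫) (l ×ˢ 𝓝 η) (𝓝 0) := by
  have hbound : Continuous fun γ : Pth T p => L * ‖γ - η‖ * K := by fun_prop
  refine squeeze_zero_norm' (Eventually.of_forall fun q => ?_)
    ((hbound.tendsto' η 0 (by simp)).comp tendsto_snd)
  calc _ ≤ L * ‖q.2 - η‖ * ∫ s in Icc 0 T, ‖w q.1 s‖ :=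
        abs_integral_inner_le_of_norm_le (hh.norm_comp_pext_sub_le hT q.2 η) (hw q.1)
    _ ≤ L * ‖q.2 - η‖ * K := by gcongr; exact hK q.1

end Paths

section Hfun

variable {T : ℝ} {d m : ℕ} {h : EuclideanSpace ℝ (Fin d) → EuclideanSpace ℝ (Fin m)} {L : ℝ≥0}

theorem abs_Hfun_sub_Hfun_le (hT : 0 < T) (hh : LipschitzWith L h)
    {ψ : ℝ → EuclideanSpace ℝ (Fin m)} (hψ : L2on T ψ) (η ζ ζ' : Pth T d) :
    |Hfun hT h η ζ ψ - Hfun hT h η ζ' ψ| ≤ 2⁻¹ * (L * ‖ζ - ζ'‖ *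
      (T * (4 * ‖h 0‖ + L * (2 * ‖η‖ + ‖ζ‖ + ‖ζ'‖)) + 2 * ∫ s in Icc 0 T, ‖ψ s‖)) := by
  have hmem (γ : Pth T d) := hh.memLp_comp_pext hT.le γ 2
  have hbd (γ : Pth T d) (s : ℝ) := hh.norm_comp_pext_le hT.le γ s
  have hψ' : Integrable ψ (volume.restrict (Icc 0 T)) := hψ.integrable one_le_two
  have key := abs_integral_sq_norm_sub_le
    (f := fun s => h (pext hT.le η s) - h (pext hT.le ζ s) - ψ s)
    (g := fun s => h (pext hT.le η s) - h (pext hT.le ζ' s) - ψ s)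
    (b := fun s => 4 * ‖h 0‖ + L * (2 * ‖η‖ + ‖ζ‖ + ‖ζ'‖) + 2 * ‖ψ s‖)
    (c := L * ‖ζ - ζ'‖) (((hmem η).sub (hmem ζ)).sub hψ) (((hmem η).sub (hmem ζ')).sub hψ)
    ((integrable_const _).add (hψ'.norm.const_mul 2)) (fun s => ?_) (fun s => ?_)
  · rw [integral_add (integrable_const _) (hψ'.norm.const_mul 2), integral_const_mul,
      setIntegral_const, Real.volume_real_Icc_of_le hT.le, sub_zero, smul_eq_mul] at key
    rw [Hfun, Hfun, ← mul_sub, abs_mul, abs_of_pos (by norm_num : (0:ℝ) < 2⁻¹)]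
    exact mul_le_mul_of_nonneg_left key (by norm_num)
  · rw [sub_sub_sub_cancel_right, sub_sub_sub_cancel_left, norm_sub_rev ζ]
    exact hh.norm_comp_pext_sub_le hT.le ζ' ζ s
  · have hsub₃ (x y z : EuclideanSpace ℝ (Fin m)) : ‖x - y - z‖ ≤ ‖x‖ + ‖y‖ + ‖z‖ :=
      (norm_sub_le _ _).trans (by grw [norm_sub_le])
    linarith [hsub₃ (h (pext hT.le η s)) (h (pext hT.le ζ s)) (ψ s),
      hsub₃ (h (pext hT.le η s)) (h (pext hT.le ζ' s)) (ψ s), hbd η s, hbd ζ s, hbd ζ' s]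

theorem tendsto_Hfun_sub_Hfun (hT : 0 < T) (hh : LipschitzWith L h)
    {ψ : ℝ → EuclideanSpace ℝ (Fin m)} (hψ : L2on T ψ) {ι : Type*} {l : Filter ι}
    {ζ : ι → Pth T d} {ζ₀ : Pth T d} (hζ : Tendsto ζ l (𝓝 ζ₀)) (η : Pth T d) :
    Tendsto (fun p : ι × Pth T d => Hfun hT h p.2 ζ₀ ψ - Hfun hT h p.2 (ζ p.1) ψ)
      (l ×ˢ 𝓝 η) (𝓝 0) := by
  set bound := fun q : Pth T d × Pth T d => 2⁻¹ * (L * ‖ζ₀ - q.1‖ *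
    (T * (4 * ‖h 0‖ + L * (2 * ‖q.2‖ + ‖ζ₀‖ + ‖q.1‖)) + 2 * ∫ s in Icc 0 T, ‖ψ s‖))
  have hbound : Tendsto bound (𝓝 (ζ₀, η)) (𝓝 0) :=
    (show Continuous bound by fun_prop).tendsto' _ _ (by simp [bound])
  have hle (p : ι × Pth T d) :
      ‖Hfun hT h p.2 ζ₀ ψ - Hfun hT h p.2 (ζ p.1) ψ‖ ≤ bound (ζ p.1, p.2) :=
    abs_Hfun_sub_Hfun_le hT hh hψ p.2 ζ₀ (ζ p.1)
  exact squeeze_zero_norm' (Eventually.of_forall hle)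
    (hbound.comp ((hζ.comp tendsto_fst).prodMk_nhds tendsto_snd))

end Hfun

/-- **Lemma 5.5 (`uniformconv`).**
With `Δ^n(η) = H(η,ξ₀,v) − H(η,ξ^n,v) + ∫₀ᵀ⟨h(η(s)), v^n(s)−v(s)⟩ds`, if `ξ^n → ξ₀`
uniformly and `v^n → v` weakly in `L²` with bounded norms, then for every `δ > 0` and
`η ∈ C_d` there are `n₀` and `δ₁ > 0` with `|Δ^n(η̃)| < δ` whenever `‖η−η̃‖_* ≤ δ₁`
and `n ≥ n₀`. -/
theorem Delta_locally_uniformly_small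
    {T : ℝ} (hT : 0 < T) {d m : ℕ}
    (h : EuclideanSpace ℝ (Fin d) → EuclideanSpace ℝ (Fin m))
    (clip : ℝ≥0) (hh : LipschitzWith clip h)
    (ξ : ℕ → Pth T d) (ξ₀ : Pth T d)
    (hξ : Filter.Tendsto ξ Filter.atTop (𝓝 ξ₀))
    (v : ℕ → ℝ → EuclideanSpace ℝ (Fin m)) (v₀ : ℝ → EuclideanSpace ℝ (Fin m))
    (hvL2 : ∀ n, L2on T (v n)) (hv₀L2 : L2on T v₀)
    (hvbd : ∃ M : ℝ, ∀ n, (∫ s in Set.Icc (0:ℝ) T, ‖v n s‖ ^ 2) ≤ M)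
    (hweak : ∀ f : ℝ → EuclideanSpace ℝ (Fin m), L2on T f →
      Filter.Tendsto (fun n => ∫ s in Set.Icc (0:ℝ) T, ⟪v n s, f s⟫)
        Filter.atTop (𝓝 (∫ s in Set.Icc (0:ℝ) T, ⟪v₀ s, f s⟫))) :
    ∀ δ > (0:ℝ), ∀ η : Pth T d, ∃ n₀ : ℕ, ∃ δ₁ > (0:ℝ),
      ∀ ηt : Pth T d, ‖η - ηt‖ ≤ δ₁ → ∀ n ≥ n₀,
        |Hfun hT h ηt ξ₀ v₀ - Hfun hT h ηt (ξ n) v₀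
          + ∫ s in Set.Icc (0:ℝ) T, ⟪h (pext hT.le ηt s), v n s - v₀ s⟫| < δ := by
  intro δ hδ η
  obtain ⟨M, hM⟩ := hvbd
  have hv₀ : Integrable v₀ (volume.restrict (Icc 0 T)) := hv₀L2.integrable one_le_two
  obtain ⟨K, hK⟩ := exists_forall_integral_norm_sub_le hvL2 hv₀ hM
  have hhη := hh.memLp_comp_pext hT.le η 2
  have hsmall := ((tendsto_Hfun_sub_Hfun hT hh hv₀L2 hξ η).add
    ((tendsto_sub_nhds_zero_iff.2 (hweak _ hhη)).comp tendsto_fst)).add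
    (hh.tendsto_integral_inner_comp_pext_sub hT.le
      (fun n => ((hvL2 n).integrable one_le_two).sub hv₀) hK η)
  rw [add_zero, add_zero] at hsmall
  obtain ⟨n₀, δ₁, hδ₁, hlt⟩ := exists_forall_abs_lt_of_tendsto_atTop_prod_nhds hsmall hδ
  refine ⟨n₀, δ₁, hδ₁, fun ηt hηt n hn => ?_⟩
  rw [integral_inner_sub_eq_sub_add (hh.memLp_comp_pext hT.le ηt 2).1
    (hh.norm_comp_pext_le hT.le ηt) hhη.1 (hh.norm_comp_pext_le hT.le η)
    ((hvL2 n).integrable one_le_two) hv₀, ← add_assoc]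
  exact hlt ηt (by rwa [dist_eq_norm]) n hn

end
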